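/- Let k ≥ 2 be an integer and let t ∈ K satisfy |t − (1 + 2^{2k})| ≤ 2^{−(2k+1)}. Then for f_t(z) = z³ − (3/2) t z² one has |f_t(t) + 1/2| ≤ 2^{−(2k−1)}, and for every integer i with 2 ≤ i ≤ k, |f_tⁱ(t) + 1/2| = 2^{−(2k−2i+2)}. -/

import Mathlib

/-!
For `t = 1`, the point `-1/2` is a fixed point of `f_t = cubicMap t` with multiplier
`f_1'(-1/2) = 9/4`, of `2`-adic absolute value `4`. For `t = 1 + s` it moves, to first order in
`s`, to `p_t = approxFixedPoint t = -1/2 + (3/10) s`, and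
`f_t(x) - p_t = (9/4)(x - p_t) + O(|x - p_t|²)`, so `|f_t(x) - p_t| = 4 |x - p_t|` as long as
`|s| ≤ |x - p_t| ≤ 1/4`. The critical point `t` is sent to distance exactly `|s| = 2^(-2k)` from
`p_t`, so the distance of `f_tⁱ(t)` to `p_t` is `4^(i-1) |s|` for `i ≤ k`. Since
`|p_t + 1/2| = 2|s|`, this is also `|f_tⁱ(t) + 1/2|` as soon as `i ≥ 2`, and for `i = 1` it
bounds `|f_t(t) + 1/2|` by `2|s|`.
-/

namespace IsUltrametricDist
variable {S : Type*} [SeminormedAddGroup S] [IsUltrametricDist S]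

lemma norm_add_eq_left_of_norm_lt {a b : S} (h : ‖b‖ < ‖a‖) : ‖a + b‖ = ‖a‖ := by
  rw [norm_add_eq_max_of_norm_ne_norm h.ne', max_eq_left h.le]

lemma norm_sub_le_max (a b : S) : ‖a - b‖ ≤ max ‖a‖ ‖b‖ := by
  simpa [sub_eq_add_neg] using norm_add_le_max a (-b)

end IsUltrametricDist

open IsUltrametricDist

section Field
variable {K : Type*} [Field K]

def cubicMap (t z : K) : K := z ^ 3 - 3 / 2 * t * z ^ 2

def approxFixedPoint (t : K) : K := -1 / 2 + 3 / 10 * (t - 1)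

lemma cubicMap_sub_approxFixedPoint (h2 : (2 : K) ≠ 0) (h5 : (5 : K) ≠ 0) (t x : K) :
    cubicMap t x - approxFixedPoint t = 9 / 4 * (x - approxFixedPoint t) +
      (x + 1 / 2) * ((x + 1 / 2) * (x + 1 / 2 - 3) + 3 / 2 * (t - 1) * (1 - (x + 1 / 2))) := by
  have h10 : (10 : K) = 2 * 5 := by norm_num
  have h4 : (4 : K) = 2 * 2 := by norm_num
  unfold cubicMap approxFixedPoint
  rw [h10, h4]
  field_simp
  ring

lemma cubicMap_self_sub_approxFixedPoint (h2 : (2 : K) ≠ 0) (h5 : (5 : K) ≠ 0) (t : K) :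
    cubicMap t t - approxFixedPoint t = -(t - 1) * (9 / 5 + 1 / 2 * (t - 1) * (3 + (t - 1))) := by
  have h10 : (10 : K) = 2 * 5 := by norm_num
  unfold cubicMap approxFixedPoint
  rw [h10]
  field_simp
  ring

lemma add_half_eq_sub_approxFixedPoint_add (t x : K) :
    x + 1 / 2 = (x - approxFixedPoint t) + 3 / 10 * (t - 1) := by
  unfold approxFixedPoint
  ring

end Field

section Normed
variable {K : Type*} [NormedField K]

lemma norm_two_three_five_of_padicNorm (hext : ∀ q : ℚ, ‖(q : K)‖ = (padicNorm 2 q : ℝ)) :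
    ‖(2 : K)‖ = 2⁻¹ ∧ ‖(3 : K)‖ = 1 ∧ ‖(5 : K)‖ = 1 := by
  have hnat (n : ℕ) : ‖(n : K)‖ = padicNorm 2 n := by exact_mod_cast hext n
  have hodd (n : ℕ) (hn : ¬ 2 ∣ n) : ‖(n : K)‖ = 1 := by
    rw [hnat, (padicNorm.nat_eq_one_iff n).mpr hn, Rat.cast_one]
  refine ⟨?_, by exact_mod_cast hodd 3 (by norm_num), by exact_mod_cast hodd 5 (by norm_num)⟩
  rw [← Nat.cast_ofNat, hnat, padicNorm.padicNorm_p_of_prime]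
  norm_num

lemma norm_three_div_ten_mul (h2 : ‖(2 : K)‖ = 2⁻¹) (h3 : ‖(3 : K)‖ = 1) (h5 : ‖(5 : K)‖ = 1)
    (s : K) : ‖3 / 10 * s‖ = 2 * ‖s‖ := by
  rw [show (10 : K) = 2 * 5 by norm_num, norm_mul, norm_div, norm_mul, h2, h3, h5]
  norm_num

end Normed

section Ultrametric
variable {K : Type*} [NormedField K] [IsUltrametricDist K]

lemma norm_sub_one_eq_of_norm_sub_lt (h2 : ‖(2 : K)‖ = 2⁻¹) {m : ℕ} {t : K}
    (ht : ‖t - (1 + 2 ^ m)‖ < 2⁻¹ ^ m) : ‖t - 1‖ = 2⁻¹ ^ m := by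
  have hpow : ‖(2 : K) ^ m‖ = 2⁻¹ ^ m := by rw [norm_pow, h2]
  rw [show t - 1 = 2 ^ m + (t - (1 + 2 ^ m)) by ring, norm_add_eq_left_of_norm_lt (hpow ▸ ht),
    hpow]

lemma norm_add_half_le_max (h2 : ‖(2 : K)‖ = 2⁻¹) (h3 : ‖(3 : K)‖ = 1) (h5 : ‖(5 : K)‖ = 1)
    (t x : K) : ‖x + 1 / 2‖ ≤ max ‖x - approxFixedPoint t‖ (2 * ‖t - 1‖) := by
  rw [add_half_eq_sub_approxFixedPoint_add t, ← norm_three_div_ten_mul h2 h3 h5]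
  exact norm_add_le_max _ _

lemma norm_add_half_eq_of_lt (h2 : ‖(2 : K)‖ = 2⁻¹) (h3 : ‖(3 : K)‖ = 1) (h5 : ‖(5 : K)‖ = 1)
    {t x : K} (h : 2 * ‖t - 1‖ < ‖x - approxFixedPoint t‖) :
    ‖x + 1 / 2‖ = ‖x - approxFixedPoint t‖ := by
  rw [← norm_three_div_ten_mul h2 h3 h5] at h
  rw [add_half_eq_sub_approxFixedPoint_add t, norm_add_eq_left_of_norm_lt h]

theorem norm_cubicMap_self_sub_approxFixedPoint (h2 : ‖(2 : K)‖ = 2⁻¹) (h3 : ‖(3 : K)‖ = 1)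
    (h5 : ‖(5 : K)‖ = 1) {t : K} (hs : ‖t - 1‖ < 2⁻¹) :
    ‖cubicMap t t - approxFixedPoint t‖ = ‖t - 1‖ := by
  have h95 : ‖(9 / 5 : K)‖ = 1 := by
    rw [show (9 : K) = 3 ^ 2 by norm_num, norm_div, norm_pow, h3, h5]
    norm_num
  have h3s : ‖3 + (t - 1)‖ ≤ 1 := (norm_add_le_max _ _).trans (max_le h3.le (by linarith))
  have hsmall : ‖1 / 2 * (t - 1) * (3 + (t - 1))‖ < ‖(9 / 5 : K)‖ := by
    rw [h95, norm_mul, norm_mul, norm_div, norm_one, h2]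
    calc 1 / 2⁻¹ * ‖t - 1‖ * ‖3 + (t - 1)‖ ≤ 2 * ‖t - 1‖ * 1 := by
          rw [one_div, inv_inv]; gcongr
      _ < 1 := by linarith
  have h2ne : (2 : K) ≠ 0 := norm_ne_zero_iff.mp (by rw [h2]; norm_num)
  have h5ne : (5 : K) ≠ 0 := norm_ne_zero_iff.mp (by rw [h5]; norm_num)
  rw [cubicMap_self_sub_approxFixedPoint h2ne h5ne, norm_mul, norm_neg,
    norm_add_eq_left_of_norm_lt hsmall, h95, mul_one]

theorem norm_cubicMap_sub_approxFixedPoint (h2 : ‖(2 : K)‖ = 2⁻¹) (h3 : ‖(3 : K)‖ = 1)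
    (h5 : ‖(5 : K)‖ = 1) {t x : K} (hs : 0 < ‖t - 1‖)
    (hse : ‖t - 1‖ ≤ ‖x - approxFixedPoint t‖) (he : ‖x - approxFixedPoint t‖ ≤ 4⁻¹) :
    ‖cubicMap t x - approxFixedPoint t‖ = 4 * ‖x - approxFixedPoint t‖ := by
  set e := x - approxFixedPoint t
  set d := x + 1 / 2
  have h94 : ‖(9 / 4 : K)‖ = 4 := by
    rw [show (9 / 4 : K) = 3 ^ 2 / 2 ^ 2 by norm_num, norm_div, norm_pow, norm_pow, h2, h3]
    norm_num
  have h32 : ‖(3 / 2 : K)‖ = 2 := by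
    rw [norm_div, h2, h3]
    norm_num
  have hd : ‖d‖ ≤ 2 * ‖e‖ :=
    (norm_add_half_le_max h2 h3 h5 t x).trans (max_le (by linarith) (by linarith))
  have hd3 : ‖d - 3‖ ≤ 1 := (norm_sub_le_max _ _).trans (max_le (by linarith) h3.le)
  have h1d : ‖1 - d‖ ≤ 1 := (norm_sub_le_max _ _).trans (max_le norm_one.le (by linarith))
  have hB : ‖d * (d - 3) + 3 / 2 * (t - 1) * (1 - d)‖ ≤ 2 * ‖e‖ := by
    refine (norm_add_le_max _ _).trans (max_le ?_ ?_)
    · rw [norm_mul]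
      nlinarith [norm_nonneg d]
    · rw [norm_mul, norm_mul, h32]
      nlinarith [norm_nonneg (t - 1)]
  -- the error term has norm at most `4 ‖e‖ ^ 2 ≤ ‖e‖`
  have hE : ‖d * (d * (d - 3) + 3 / 2 * (t - 1) * (1 - d))‖ < ‖9 / 4 * e‖ := by
    rw [norm_mul, norm_mul, h94]
    nlinarith [norm_nonneg d, norm_nonneg (d * (d - 3) + 3 / 2 * (t - 1) * (1 - d))]
  have h2ne : (2 : K) ≠ 0 := norm_ne_zero_iff.mp (by rw [h2]; norm_num)
  have h5ne : (5 : K) ≠ 0 := norm_ne_zero_iff.mp (by rw [h5]; norm_num)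
  rw [cubicMap_sub_approxFixedPoint h2ne h5ne, norm_add_eq_left_of_norm_lt hE, norm_mul, h94]

theorem norm_iterate_cubicMap_sub_approxFixedPoint (h2 : ‖(2 : K)‖ = 2⁻¹) (h3 : ‖(3 : K)‖ = 1)
    (h5 : ‖(5 : K)‖ = 1) {t : K} (hs : 0 < ‖t - 1‖) {n : ℕ} (hn : 4 ^ n * ‖t - 1‖ ≤ 4⁻¹) :
    ‖(cubicMap t)^[n + 1] t - approxFixedPoint t‖ = 4 ^ n * ‖t - 1‖ := by
  induction n with
  | zero =>
    rw [pow_zero, one_mul] at hn ⊢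
    exact norm_cubicMap_self_sub_approxFixedPoint h2 h3 h5 (by linarith)
  | succ n ih =>
    rw [pow_succ] at hn ⊢
    have h4n : 1 ≤ (4 : ℝ) ^ n := one_le_pow₀ (by norm_num)
    have he := ih (by nlinarith)
    rw [Function.iterate_succ_apply', norm_cubicMap_sub_approxFixedPoint h2 h3 h5 hs, he]
    · ring
    · rw [he]; nlinarith
    · rw [he]; linarith

theorem norm_cubicMap_self_add_half_le (h2 : ‖(2 : K)‖ = 2⁻¹) (h3 : ‖(3 : K)‖ = 1)
    (h5 : ‖(5 : K)‖ = 1) {t : K} (hs : ‖t - 1‖ < 2⁻¹) :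
    ‖cubicMap t t + 1 / 2‖ ≤ 2 * ‖t - 1‖ := by
  have h := norm_add_half_le_max h2 h3 h5 t (cubicMap t t)
  rwa [norm_cubicMap_self_sub_approxFixedPoint h2 h3 h5 hs,
    max_eq_right (by linarith [norm_nonneg (t - 1)])] at h

theorem norm_iterate_cubicMap_add_half (h2 : ‖(2 : K)‖ = 2⁻¹) (h3 : ‖(3 : K)‖ = 1)
    (h5 : ‖(5 : K)‖ = 1) {t : K} (hs : 0 < ‖t - 1‖) {n : ℕ} (hn0 : 1 ≤ n)
    (hn : 4 ^ n * ‖t - 1‖ ≤ 4⁻¹) :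
    ‖(cubicMap t)^[n + 1] t + 1 / 2‖ = 4 ^ n * ‖t - 1‖ := by
  have horbit := norm_iterate_cubicMap_sub_approxFixedPoint h2 h3 h5 hs hn
  have h4n : (4 : ℝ) ≤ 4 ^ n := le_self_pow₀ (by norm_num) (by omega)
  rw [norm_add_half_eq_of_lt h2 h3 h5 (by rw [horbit]; nlinarith), horbit]

end Ultrametric

theorem stmt_17_general (K : Type*) [NormedField K]
    (hna : IsNonarchimedean (fun x : K => ‖x‖))
    (hext : ∀ q : ℚ, ‖(q : K)‖ = (padicNorm 2 q : ℝ))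
    (k : ℕ) (hk : 2 ≤ k)
    (t : K) (ht : ‖t - (1 + 2 ^ (2 * k))‖ ≤ (2 : ℝ) ^ (-(2 * (k : ℤ) + 1))) :
    ‖(t ^ 3 - (3 / 2 : K) * t * t ^ 2) + 1 / 2‖ ≤ (2 : ℝ) ^ (-(2 * (k : ℤ) - 1)) ∧
    ∀ i : ℕ, 2 ≤ i → i ≤ k →
      ‖(fun z : K => z ^ 3 - (3 / 2 : K) * t * z ^ 2)^[i] t + 1 / 2‖ =
        (2 : ℝ) ^ (-(2 * (k : ℤ) - 2 * (i : ℤ) + 2)) := by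
  have : IsUltrametricDist K := isUltrametricDist_of_isNonarchimedean_norm hna
  obtain ⟨h2, h3, h5⟩ := norm_two_three_five_of_padicNorm hext
  have hinv : (2 : ℝ)⁻¹ ^ (2 * k) = 2 ^ (-(2 * k : ℤ)) := by
    rw [inv_pow, ← zpow_natCast, ← zpow_neg]
    push_cast; rfl
  have hs : ‖t - 1‖ = 2 ^ (-(2 * k : ℤ)) := hinv ▸ norm_sub_one_eq_of_norm_sub_lt h2
    (hinv ▸ ht.trans_lt (zpow_lt_zpow_right₀ one_lt_two (by omega)))
  have hfour (n : ℕ) : 4 ^ n * ‖t - 1‖ = 2 ^ (2 * n - 2 * k : ℤ) := by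
    rw [hs, show (4 : ℝ) ^ n = 2 ^ (2 * n : ℤ) by norm_num [zpow_mul, zpow_natCast],
      ← zpow_add₀ two_ne_zero]
    ring_nf
  refine ⟨?_, fun i hi hik => ?_⟩
  · refine (norm_cubicMap_self_add_half_le h2 h3 h5 ?_).trans_eq ?_
    · rw [hs, ← zpow_neg_one]
      exact zpow_lt_zpow_right₀ one_lt_two (by omega)
    · rw [hs, ← zpow_one_add₀ two_ne_zero]
      ring_nf
  · obtain ⟨n, rfl⟩ : ∃ n, i = n + 1 := ⟨i - 1, by omega⟩
    have hn : 4 ^ n * ‖t - 1‖ ≤ 4⁻¹ := by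
      rw [hfour, show (4 : ℝ)⁻¹ = 2 ^ (-2 : ℤ) by norm_num]
      exact zpow_le_zpow_right₀ one_le_two (by omega)
    change ‖(cubicMap t)^[n + 1] t + 1 / 2‖ = _
    rw [norm_iterate_cubicMap_add_half h2 h3 h5 (hs ▸ zpow_pos two_pos _) (by omega) hn, hfour]
    push_cast
    ring_nf

/-- Let `k ≥ 2` and `t ∈ K` with `|t - (1 + 2^(2k))| ≤ 2^(-(2k+1))`.
Then for `f_t(z) = z³ - (3/2) t z²` one has `|f_t(t) + 1/2| ≤ 2^(-(2k-1))`, and for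
every `2 ≤ i ≤ k`, `|f_tⁱ(t) + 1/2| = 2^(-(2k-2i+2))`. -/
theorem stmt_17 (K : Type*) [NormedField K] [IsAlgClosed K] [CompleteSpace K]
    (hna : IsNonarchimedean (fun x : K => ‖x‖))
    (hext : ∀ q : ℚ, ‖(q : K)‖ = (padicNorm 2 q : ℝ))
    (k : ℕ) (hk : 2 ≤ k)
    (t : K) (ht : ‖t - (1 + 2 ^ (2 * k))‖ ≤ (2 : ℝ) ^ (-(2 * (k : ℤ) + 1))) :
    ‖(t ^ 3 - (3 / 2 : K) * t * t ^ 2) + 1 / 2‖ ≤ (2 : ℝ) ^ (-(2 * (k : ℤ) - 1)) ∧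
    ∀ i : ℕ, 2 ≤ i → i ≤ k →
      ‖(fun z : K => z ^ 3 - (3 / 2 : K) * t * z ^ 2)^[i] t + 1 / 2‖ =
        (2 : ℝ) ^ (-(2 * (k : ℤ) - 2 * (i : ℤ) + 2)) :=
  stmt_17_general K hna hext k hk t ht
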